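/- For all a, b > 0 with a ≠ b, S(a,b) - N₁(a,b) ≤ (9/10)·(S(a,b) - L(a,b)), where S(a,b) = √((a²+b²)/2), N₁(a,b) = ((√a+√b)/2)², and L is the logarithmic mean. -/

import Mathlib

/-!
With `A = (a + b) / 2` and `G = √(ab)` one has `N₁ = (A + G) / 2`, `S ≤ 2A - G`
(squaring, this is `(A - G)² ≥ 0`) and Carlson's bound `L ≤ (A + 2G) / 3`. Then
`N₁ - (9/10) L ≥ (A + G) / 2 - 3 (A + 2G) / 10 = (2A - G) / 10 ≥ S / 10`,
which rearranges to the claim. Carlson's bound reduces, with `x = √(b / a)`, to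
`3 (x² - 1) / (x² + 4x + 1) ≤ log x` for `x ≥ 1`; the difference of the two sides
vanishes at `x = 1` and has derivative `(x - 1)⁴ / (x (x² + 4x + 1)²) ≥ 0`.
-/

open Real Set

noncomputable def logMean (a b : ℝ) : ℝ := (b - a) / (log b - log a)

lemma logMean_comm (a b : ℝ) : logMean a b = logMean b a := by
  rw [logMean, logMean, ← neg_div_neg_eq, neg_sub, neg_sub]

lemma monotoneOn_log_sub_div :
    MonotoneOn (fun y : ℝ => log y - 3 * (y ^ 2 - 1) / (y ^ 2 + 4 * y + 1)) (Ioi 0) := by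
  have hderiv : ∀ y ∈ Ioi (0 : ℝ), HasDerivAt
      (fun y : ℝ => log y - 3 * (y ^ 2 - 1) / (y ^ 2 + 4 * y + 1))
      ((y - 1) ^ 4 / (y * (y ^ 2 + 4 * y + 1) ^ 2)) y := by
    intro y (hy : 0 < y)
    have hnum : HasDerivAt (fun y : ℝ => 3 * (y ^ 2 - 1)) (6 * y) y :=
      (((hasDerivAt_pow 2 y).sub_const 1).const_mul (3 : ℝ)).congr_deriv (by ring)
    have hden : HasDerivAt (fun y : ℝ => y ^ 2 + 4 * y + 1) (2 * y + 4) y :=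
      (((hasDerivAt_pow 2 y).add ((hasDerivAt_id y).const_mul 4)).add_const 1).congr_deriv
        (by ring)
    refine ((hasDerivAt_log hy.ne').sub (hnum.div hden (by positivity))).congr_deriv ?_
    field_simp
    ring
  refine monotoneOn_of_deriv_nonneg (convex_Ioi 0)
    (fun y hy => (hderiv y hy).continuousAt.continuousWithinAt)
    (fun y hy => (hderiv y (interior_subset hy)).differentiableAt.differentiableWithinAt)
    fun y hy => ?_
  rw [interior_Ioi] at hy
  rw [(hderiv y hy).deriv]
  have : 0 < y := hy
  positivity

lemma three_mul_sq_sub_one_div_le_log {x : ℝ} (hx : 1 ≤ x) :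
    3 * (x ^ 2 - 1) / (x ^ 2 + 4 * x + 1) ≤ log x := by
  have h := monotoneOn_log_sub_div (mem_Ioi.mpr one_pos)
    (mem_Ioi.mpr (zero_lt_one.trans_le hx)) hx
  norm_num at h
  linarith

lemma three_mul_sq_sub_sq_le_mul_log_div {u v : ℝ} (hu : 0 < u) (huv : u ≤ v) :
    3 * (v ^ 2 - u ^ 2) ≤ (u ^ 2 + v ^ 2 + 4 * (u * v)) * log (v / u) := by
  have h := three_mul_sq_sub_one_div_le_log ((one_le_div hu).mpr huv)
  have hrw : 3 * ((v / u) ^ 2 - 1) / ((v / u) ^ 2 + 4 * (v / u) + 1)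
      = 3 * (v ^ 2 - u ^ 2) / (u ^ 2 + v ^ 2 + 4 * (u * v)) := by
    field_simp
    ring
  rwa [hrw, div_le_iff₀' (by nlinarith)] at h

lemma logMean_le_of_lt {a b : ℝ} (ha : 0 < a) (hab : a < b) :
    logMean a b ≤ (a + b + 4 * √(a * b)) / 6 := by
  obtain ⟨u, hu, rfl⟩ : ∃ u, 0 < u ∧ u ^ 2 = a := ⟨√a, sqrt_pos.mpr ha, sq_sqrt ha.le⟩
  obtain ⟨v, hv, rfl⟩ : ∃ v, 0 < v ∧ v ^ 2 = b :=
    ⟨√b, sqrt_pos.mpr (ha.trans hab), sq_sqrt (ha.trans hab).le⟩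
  have huv : u < v := (pow_lt_pow_iff_left₀ hu.le hv.le two_ne_zero).mp hab
  have hlog : log (v ^ 2) - log (u ^ 2) = 2 * log (v / u) := by
    rw [← log_div (by positivity) (by positivity), ← div_pow, log_pow, Nat.cast_ofNat]
  have hlog_pos : 0 < log (v / u) := log_pos ((one_lt_div hu).mpr huv)
  rw [logMean, hlog, ← mul_pow, sqrt_sq (by positivity),
    div_le_div_iff₀ (by positivity) (by norm_num)]
  nlinarith [three_mul_sq_sub_sq_le_mul_log_div hu huv.le]

lemma logMean_le {a b : ℝ} (ha : 0 < a) (hb : 0 < b) (hab : a ≠ b) :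
    logMean a b ≤ (a + b + 4 * √(a * b)) / 6 := by
  rcases hab.lt_or_gt with h | h
  · exact logMean_le_of_lt ha h
  · rw [logMean_comm, add_comm a, mul_comm a]
    exact logMean_le_of_lt hb h

lemma sqrt_sq_add_sq_div_two_le {a b : ℝ} (ha : 0 ≤ a) (hb : 0 ≤ b) :
    √((a ^ 2 + b ^ 2) / 2) ≤ a + b - √(a * b) := by
  have hG : √(a * b) ^ 2 = a * b := sq_sqrt (mul_nonneg ha hb)
  have hGA : √(a * b) ≤ (a + b) / 2 := by nlinarith [sq_nonneg (a - b), sqrt_nonneg (a * b)]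
  rw [sqrt_le_left (by linarith)]
  nlinarith [sq_nonneg ((a + b) / 2 - √(a * b))]

lemma sq_sqrt_add_sqrt_div_two {a b : ℝ} (ha : 0 ≤ a) (hb : 0 ≤ b) :
    ((√a + √b) / 2) ^ 2 = (a + b + 2 * √(a * b)) / 4 := by
  rw [sqrt_mul ha, div_pow, add_sq, sq_sqrt ha, sq_sqrt hb]
  ring

theorem MSN1_le_MSL (a b : ℝ) (ha : 0 < a) (hb : 0 < b) (hab : a ≠ b) :
    Real.sqrt ((a ^ 2 + b ^ 2) / 2) - ((Real.sqrt a + Real.sqrt b) / 2) ^ 2 ≤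
      (9 / 10) * (Real.sqrt ((a ^ 2 + b ^ 2) / 2) -
        (b - a) / (Real.log b - Real.log a)) := by
  have hL := logMean_le ha hb hab
  have hS := sqrt_sq_add_sq_div_two_le ha.le hb.le
  rw [logMean] at hL
  rw [sq_sqrt_add_sqrt_div_two ha.le hb.le]
  linarith
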